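/- For all m ≥ 1, n ≥ 0 and complex z₁, z₂, q with z₁ ≠ 0, q ≠ 1: the q-difference operator in z₁ acting on H_{m,n} satisfies D_{q,z₁} H_{m,n}(z₁, z₂ | q) = ((1-q^m)/(1-q)) H_{m-1,n}(z₁, z₂ | q), where D_q f(z) = (f(z) - f(qz))/(z - qz). -/

import Mathlib

open Finset Filter

noncomputable def qPoch (a q : ℂ) (n : ℕ) : ℂ :=
  ∏ j ∈ Finset.range n, (1 - a * q ^ j)

noncomputable def qbinom (q : ℂ) : ℕ → ℕ → ℂ
  | _, 0 => 1
  | 0, _ + 1 => 0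
  | m + 1, k + 1 => qbinom q m k + q ^ (k + 1) * qbinom q m (k + 1)

/-- The first q-analogue of the 2D Hermite polynomials. -/
noncomputable def H2D (q z1 z2 : ℂ) (m n : ℕ) : ℂ :=
  ∑ k ∈ Finset.range (min m n + 1),
    qbinom q m k * qbinom q n k * (-1) ^ k * q ^ (k.choose 2) * qPoch q q k *
      z1 ^ (m - k) * z2 ^ (n - k)

/-- The second q-analogue of the 2D Hermite polynomials. -/
noncomputable def h2D (q z1 z2 : ℂ) (m n : ℕ) : ℂ :=
  ∑ j ∈ Finset.range (min m n + 1),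
    qbinom q m j * qbinom q n j * q ^ ((m - j) * (n - j)) * (-1) ^ j * qPoch q q j *
      z1 ^ (m - j) * z2 ^ (n - j)

/-- The q-2D ultraspherical (q-disk / q-Zernike) polynomials. -/
noncomputable def p2D (q b z1 z2 : ℂ) (m n : ℕ) : ℂ :=
  ∑ k ∈ Finset.range (min m n + 1),
    qbinom q m k * qbinom q n k * (-1) ^ k * q ^ (k.choose 2) * qPoch q q k *
      qPoch (b * q) q (m + n - k) * z1 ^ (m - k) * z2 ^ (n - k)

/-- The infinite q-Pochhammer product (a;q)_∞. -/
noncomputable def qPochInf (a q : ℂ) : ℂ :=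
  ∏' j : ℕ, (1 - a * q ^ j)

/-!
Each monomial `z₁^(m-k)` of `H_{m,n}` is an eigenfunction of `f(z₁) ↦ f(z₁) - f(q z₁)` with
eigenvalue `1 - q^(m-k)`, so `D_q` acts termwise. The identity
`(1 - q^(m+1-k)) [m+1 choose k]_q = (1 - q^(m+1)) [m choose k]_q` then turns the `k`-th term of
`D_q H_{m+1,n}` into `(1 - q^(m+1))/(1 - q)` times the `k`-th term of `H_{m,n}`.
-/

theorem qbinom_eq_zero_of_lt (q : ℂ) {m k : ℕ} (h : m < k) : qbinom q m k = 0 := by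
  induction m generalizing k with
  | zero => obtain ⟨k, rfl⟩ := Nat.exists_eq_add_of_lt h; rfl
  | succ m ih =>
    obtain ⟨k, rfl⟩ := Nat.exists_eq_add_of_lt (Nat.zero_lt_of_lt h)
    rw [qbinom, ih (by omega), ih (by omega), mul_zero, add_zero]

theorem one_sub_pow_mul_qbinom_succ (q : ℂ) (m k : ℕ) :
    (1 - q ^ (m + 1 - k)) * qbinom q (m + 1) k = (1 - q ^ (m + 1)) * qbinom q m k := by
  induction m generalizing k with
  | zero => cases k <;> simp [qbinom]
  | succ m ih =>
    cases k with
    | zero => simp [qbinom]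
    | succ k =>
      rcases le_or_gt k m with hkm | hmk
      · obtain ⟨e, rfl⟩ := Nat.exists_eq_add_of_le hkm
        have hk := ih k
        have hk1 := ih (k + 1)
        rw [show k + e + 1 - k = e + 1 by omega] at hk
        rw [show k + e + 1 - (k + 1) = e by omega, qbinom] at hk1
        rw [show k + e + 1 + 1 - (k + 1) = e + 1 by omega, qbinom, qbinom]
        linear_combination hk + q ^ (k + 1) * hk1
      · rw [Nat.sub_eq_zero_of_le (by omega), qbinom_eq_zero_of_lt q (by omega : m + 1 < k + 1)]
        ring

noncomputable def H2DTerm (q z1 z2 : ℂ) (m n k : ℕ) : ℂ :=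
  qbinom q m k * qbinom q n k * (-1) ^ k * q ^ (k.choose 2) * qPoch q q k *
    z1 ^ (m - k) * z2 ^ (n - k)

theorem H2D_eq_sum_range_of_le (q z1 z2 : ℂ) {m n N : ℕ} (hN : min m n + 1 ≤ N) :
    H2D q z1 z2 m n = ∑ k ∈ range N, H2DTerm q z1 z2 m n k := by
  refine sum_subset (range_subset_range.2 hN) fun k _ hk => ?_
  have hlt : m < k ∨ n < k := by simp only [mem_range] at hk; omega
  rcases hlt with hlt | hlt <;> simp [qbinom_eq_zero_of_lt q hlt]

theorem H2DTerm_sub_H2DTerm_mul (q z1 z2 : ℂ) (m n k : ℕ) :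
    H2DTerm q z1 z2 (m + 1) n k - H2DTerm q (q * z1) z2 (m + 1) n k =
      (1 - q ^ (m + 1)) * z1 * H2DTerm q z1 z2 m n k := by
  have hkey := one_sub_pow_mul_qbinom_succ q m k
  unfold H2DTerm
  rcases le_or_gt k m with hkm | hmk
  · rw [show m + 1 - k = m - k + 1 by omega] at hkey ⊢
    linear_combination (qbinom q n k * (-1) ^ k * q ^ (k.choose 2) * qPoch q q k *
      z1 ^ (m - k) * z1 * z2 ^ (n - k)) * hkey
  · rw [qbinom_eq_zero_of_lt q hmk] at hkey ⊢
    linear_combination (qbinom q n k * (-1) ^ k * q ^ (k.choose 2) * qPoch q q k *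
      z1 ^ (m + 1 - k) * z2 ^ (n - k)) * hkey

theorem H2D_sub_H2D_mul (q z1 z2 : ℂ) (m n : ℕ) :
    H2D q z1 z2 (m + 1) n - H2D q (q * z1) z2 (m + 1) n =
      (1 - q ^ (m + 1)) * z1 * H2D q z1 z2 m n := by
  rw [H2D_eq_sum_range_of_le q z1 z2 (m := m) (N := min (m + 1) n + 1) (by omega), H2D, H2D,
    ← sum_sub_distrib, mul_sum]
  exact sum_congr rfl fun k _ => H2DTerm_sub_H2DTerm_mul q z1 z2 m n k

theorem stmt5 (m n : ℕ) (hm : 1 ≤ m) (z1 z2 q : ℂ) (hz1 : z1 ≠ 0) (hq : q ≠ 1) :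
    (H2D q z1 z2 m n - H2D q (q * z1) z2 m n) / (z1 - q * z1) =
      ((1 - q ^ m) / (1 - q)) * H2D q z1 z2 (m - 1) n := by
  obtain ⟨m, rfl⟩ := Nat.exists_eq_add_of_le' hm
  have h1q : (1 : ℂ) - q ≠ 0 := sub_ne_zero_of_ne hq.symm
  rw [Nat.add_sub_cancel, H2D_sub_H2D_mul, show z1 - q * z1 = z1 * (1 - q) by ring]
  field_simp
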